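/- arXiv:1401.3420 — 3 statements merged into one kernel-verified Lean document; each statement's English description precedes it below -/
import Mathlib

section
/- If D ∈ ℂ^{M×N} is a full-spark frame, then every minimizer x* of (P^ε_∞) satisfies √(N − M + 1) · ‖x*‖_∞ ≤ ‖x*‖₂. -/
open scoped BigOperators Matrix

/-- Euclidean (ℓ₂) norm of a complex vector. -/
noncomputable def l2 {n : ℕ} (x : Fin n → ℂ) : ℝ := Real.sqrt (∑ i, ‖x i‖ ^ 2)

/-- ℓ∞ (maximum) norm of a complex vector. -/
noncomputable def linf {n : ℕ} (x : Fin n → ℂ) : ℝ := ⨆ i, ‖x i‖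

/-- ℓ₁ norm of a complex vector. -/
noncomputable def l1 {n : ℕ} (x : Fin n → ℂ) : ℝ := ∑ i, ‖x i‖

lemma linf_exists_max {n : ℕ} (hn : 0 < n) (x : Fin n → ℂ) :
    ∃ i₀, linf x = ‖x i₀‖ ∧ ∀ i, ‖x i‖ ≤ ‖x i₀‖ := by
  haveI : Nonempty (Fin n) := ⟨⟨0, hn⟩⟩
  obtain ⟨i₀, hi₀⟩ := Finite.exists_max (fun i => ‖x i‖)
  refine ⟨i₀, ?_, hi₀⟩
  unfold linf
  exact le_antisymm (ciSup_le hi₀)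
    (le_ciSup (Set.finite_range fun i => ‖x i‖).bddAbove i₀)

/-- Democratic ℓ∞/ℓ₂-norm inequality for full-spark frames. -/
theorem norm_inequality {M N : ℕ} (D : Matrix (Fin M) (Fin N) ℂ) (y : Fin M → ℂ) (ε : ℝ)
    (hMN : M ≤ N) (hε : 0 ≤ ε) (hεy : ε < l2 y)
    (hspark : ∀ f : Fin M → Fin N, Function.Injective f →
      LinearIndependent ℂ (fun j : Fin M => fun i : Fin M => D i (f j)))
    (x : Fin N → ℂ)
    (hfeas : l2 (y - D.mulVec x) ≤ ε)
    (hmin : ∀ x' : Fin N → ℂ, l2 (y - D.mulVec x') ≤ ε → linf x ≤ linf x') :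
    Real.sqrt ((N - M + 1 : ℕ) : ℝ) * linf x ≤ l2 x := by
  -- dispose of the degenerate case M = 0
  rcases Nat.eq_zero_or_pos M with hM0 | hMpos
  · exfalso
    subst hM0
    have hy : l2 y = 0 := by simp [l2]
    rw [hy] at hεy; linarith
  have hNpos : 0 < N := lt_of_lt_of_le hMpos hMN
  haveI : Nonempty (Fin N) := ⟨⟨0, hNpos⟩⟩
  haveI : Nonempty (Fin M) := ⟨⟨0, hMpos⟩⟩
  obtain ⟨i₀, hlinf, hmax⟩ := linf_exists_max hNpos x
  set T := linf x with hTdef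
  -- x ≠ 0
  have hx0 : x ≠ 0 := by
    rintro rfl
    simp only [Matrix.mulVec_zero, sub_zero] at hfeas
    linarith
  -- T > 0
  have hTpos : 0 < T := by
    rcases (norm_nonneg (x i₀)).lt_or_eq with h | h
    · exact lt_of_lt_of_le h hlinf.ge
    · exfalso
      apply hx0
      funext i
      have hi := hmax i
      rw [← h] at hi
      simpa using norm_le_zero_iff.mp hi
  -- the set of entries achieving the max
  set S : Finset (Fin N) := Finset.univ.filter (fun i => ‖x i‖ = T) with hSdef
  have hmemS : ∀ i, i ∈ S ↔ ‖x i‖ = T := by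
    intro i; simp [hSdef]
  have hltT : ∀ i, i ∉ S → ‖x i‖ < T := by
    intro i hi
    refine lt_of_le_of_ne ?_ (fun h => hi ((hmemS i).mpr h))
    exact (hmax i).trans hlinf.ge
  -- key claim: at least N - M + 1 entries achieve the max
  have hcard : N - M + 1 ≤ S.card := by
    by_contra hcon
    push_neg at hcon
    have hScard : S.card ≤ N - M := by omega
    have hSleN : S.card ≤ N := le_trans (Finset.card_le_univ S) (by simp)
    have hcompl : M ≤ Sᶜ.card := by
      rw [Finset.card_compl]
      simp only [Fintype.card_fin]
      omega
    set Sc := Sᶜ with hScdef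
    -- an injective map into the complement of S
    set f : Fin M → Fin N :=
      fun j => Sc.orderEmbOfFin (rfl : Sc.card = Sc.card) (Fin.castLE hcompl j) with hfdef
    have hfS : ∀ j, f j ∉ S := by
      intro j
      have : f j ∈ Sc := Finset.orderEmbOfFin_mem Sc rfl _
      rw [hScdef, Finset.mem_compl] at this
      exact this
    have hfinj : Function.Injective f := by
      intro a b hab
      exact Fin.castLE_injective hcompl ((Sc.orderEmbOfFin rfl).injective hab)
    have hli := hspark f hfinj
    -- basis of ℂ^M from the M linearly independent columns
    have hcardeq : Fintype.card (Fin M) = Module.finrank ℂ (Fin M → ℂ) := by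
      simp
    set b := basisOfLinearIndependentOfCardEqFinrank hli hcardeq with hbdef
    have hb : ⇑b = fun j : Fin M => fun i : Fin M => D i (f j) :=
      coe_basisOfLinearIndependentOfCardEqFinrank hli hcardeq
    -- the part of x on S
    set u : Fin N → ℂ := fun i => if i ∈ S then x i else 0 with hudef
    set w : Fin M → ℂ := D.mulVec u with hwdef
    set c : Fin M → ℂ := fun j => b.repr w j with hcdef
    set hh : Fin N → ℂ := fun i => ∑ j, if f j = i then c j else 0 with hhhdef
    -- hh vanishes on S
    have hhS : ∀ i ∈ S, hh i = 0 := by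
      intro i hi
      rw [hhhdef]
      apply Finset.sum_eq_zero
      intro j _
      rw [if_neg]
      intro hji
      exact hfS j (hji ▸ hi)
    -- D * hh = w
    have hDhh : D.mulVec hh = w := by
      have hw : ∑ j, c j • (fun i : Fin M => D i (f j)) = w := by
        have := b.sum_repr w
        rw [hb] at this
        exact this
      funext k
      have h1 : D.mulVec hh k = ∑ i, D k i * hh i := by
        simp [Matrix.mulVec, dotProduct]
      rw [h1]
      have h2 : ∀ i, D k i * hh i = ∑ j, if f j = i then D k i * c j else 0 := by
        intro i
        rw [hhhdef, Finset.mul_sum]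
        refine Finset.sum_congr rfl fun j _ => ?_
        split <;> simp
      simp_rw [h2]
      rw [Finset.sum_comm]
      have h3 : ∀ j, (∑ i, if f j = i then D k i * c j else 0) = D k (f j) * c j := by
        intro j
        rw [Finset.sum_ite_eq]
        simp
      simp_rw [h3]
      rw [← hw]
      simp [mul_comm]
    -- complement is nonempty
    have hne : Sc.Nonempty := Finset.card_pos.mp (lt_of_lt_of_le hMpos hcompl)
    -- step size
    set δ : ℝ := Sc.inf' hne (fun i => (T - ‖x i‖) / (‖hh i‖ + 1)) with hδdef
    have hδpos : 0 < δ := by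
      rw [hδdef, Finset.lt_inf'_iff]
      intro i hi
      have hiS : i ∉ S := Finset.mem_compl.mp hi
      have := hltT i hiS
      have hden : (0:ℝ) < ‖hh i‖ + 1 := by positivity
      exact div_pos (by linarith) hden
    set t : ℝ := min (1/2) δ with htdef
    have htpos : 0 < t := lt_min (by norm_num) hδpos
    have hthalf : t ≤ 1/2 := min_le_left _ _
    -- perturbed vector
    set x' : Fin N → ℂ := fun i => x i - (t:ℂ) * u i + (t:ℂ) * hh i with hx'def
    -- feasibility of x'
    have hDx' : D.mulVec x' = D.mulVec x := by
      have : x' = x - (t:ℂ) • u + (t:ℂ) • hh := by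
        funext i; simp [hx'def, Pi.smul_apply, smul_eq_mul]
      rw [this, Matrix.mulVec_add, Matrix.mulVec_sub, Matrix.mulVec_smul,
        Matrix.mulVec_smul, hDhh, ← hwdef]
      abel
    have hfeas' : l2 (y - D.mulVec x') ≤ ε := by rw [hDx']; exact hfeas
    have hminle : T ≤ linf x' := hmin x' hfeas'
    -- but linf x' < T
    obtain ⟨i₁, hlinf', _⟩ := linf_exists_max hNpos x'
    have hlt : ‖x' i₁‖ < T := by
      by_cases hi₁ : i₁ ∈ S
      · have hu : u i₁ = x i₁ := by rw [hudef]; simp [hi₁]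
        have hhh0 : hh i₁ = 0 := hhS i₁ hi₁
        have : x' i₁ = ((1 - t : ℝ) : ℂ) * x i₁ := by
          rw [hx'def]
          simp only [hu, hhh0, mul_zero, add_zero]
          push_cast
          ring
        rw [this, norm_mul, Complex.norm_real, Real.norm_eq_abs]
        have hxi : ‖x i₁‖ = T := (hmemS i₁).mp hi₁
        rw [hxi, abs_of_nonneg (by linarith : (0:ℝ) ≤ 1 - t)]
        nlinarith
      · have hu : u i₁ = 0 := by rw [hudef]; simp [hi₁]
        have hxlt := hltT i₁ hi₁
        have hδle : t ≤ (T - ‖x i₁‖) / (‖hh i₁‖ + 1) := by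
          refine le_trans (min_le_right _ _) ?_
          exact Finset.inf'_le _ (Finset.mem_compl.mpr hi₁)
        have hden : (0:ℝ) < ‖hh i₁‖ + 1 := by positivity
        have hkey : t * (‖hh i₁‖ + 1) ≤ T - ‖x i₁‖ := by
          rw [← le_div_iff₀ hden]; exact hδle
        have hnorm : ‖x' i₁‖ ≤ ‖x i₁‖ + t * ‖hh i₁‖ := by
          rw [hx'def]
          simp only [hu, mul_zero, sub_zero]
          calc ‖x i₁ + (t:ℂ) * hh i₁‖ ≤ ‖x i₁‖ + ‖(t:ℂ) * hh i₁‖ := norm_add_le _ _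
            _ = ‖x i₁‖ + t * ‖hh i₁‖ := by
                rw [norm_mul, Complex.norm_real, Real.norm_eq_abs, abs_of_pos htpos]
        nlinarith
    rw [← hlinf'] at hlt
    linarith
  -- conclude the ℓ₂ bound
  have hsum : ((N - M + 1 : ℕ) : ℝ) * T ^ 2 ≤ ∑ i, ‖x i‖ ^ 2 := by
    have h1 : ∑ i ∈ S, ‖x i‖ ^ 2 ≤ ∑ i, ‖x i‖ ^ 2 :=
      Finset.sum_le_sum_of_subset_of_nonneg (Finset.subset_univ S)
        (fun i _ _ => sq_nonneg _)
    have h2 : ∑ i ∈ S, ‖x i‖ ^ 2 = S.card * T ^ 2 := by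
      rw [Finset.sum_congr rfl (fun i hi => by rw [(hmemS i).mp hi])]
      simp [mul_comm]
    have h3 : ((N - M + 1 : ℕ) : ℝ) * T ^ 2 ≤ (S.card : ℝ) * T ^ 2 := by
      apply mul_le_mul_of_nonneg_right _ (sq_nonneg T)
      exact_mod_cast hcard
    linarith
  have hgoal : Real.sqrt (((N - M + 1 : ℕ) : ℝ) * T ^ 2) ≤ l2 x := by
    rw [l2]
    exact Real.sqrt_le_sqrt hsum
  calc Real.sqrt ((N - M + 1 : ℕ) : ℝ) * T
      = Real.sqrt (((N - M + 1 : ℕ) : ℝ) * T ^ 2) := by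
        rw [Real.sqrt_mul (by positivity), Real.sqrt_sq hTpos.le]
    _ ≤ l2 x := hgoal
end

section
/- Let D ∈ ℂ^{M×N} be a full-spark frame, y ∈ ℂ^M with y ≠ 0, and 0 ≤ ε < ‖y‖₂. Then every minimizer x* of (P^ε_∞) satisfies PAPR(x*) = N‖x*‖_∞²/‖x*‖₂² ≤ N/(N − M + 1). -/
open scoped BigOperators Matrix

/-- Full-spark PAPR bound: `PAPR(x*) ≤ N/(N-M+1)` for every minimizer of `(P^ε_∞)`. -/
theorem fullspark_papr_bound {M N : ℕ} (D : Matrix (Fin M) (Fin N) ℂ) (y : Fin M → ℂ) (ε : ℝ)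
    (hMN : M ≤ N) (hy : y ≠ 0) (hε : 0 ≤ ε) (hεy : ε < l2 y)
    (hspark : ∀ f : Fin M → Fin N, Function.Injective f →
      LinearIndependent ℂ (fun j : Fin M => fun i : Fin M => D i (f j)))
    (x : Fin N → ℂ)
    (hfeas : l2 (y - D.mulVec x) ≤ ε)
    (hmin : ∀ x' : Fin N → ℂ, l2 (y - D.mulVec x') ≤ ε → linf x ≤ linf x') :
    (N : ℝ) * linf x ^ 2 / l2 x ^ 2 ≤ (N : ℝ) / ((N - M + 1 : ℕ) : ℝ) := by
  classical
  set m := linf x with hm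
  have hx0 : x ≠ 0 := by
    rintro rfl
    rw [Matrix.mulVec_zero, sub_zero] at hfeas
    exact absurd hfeas (not_le.mpr hεy)
  obtain ⟨i₀, hi₀⟩ : ∃ i, x i ≠ 0 := Function.ne_iff.mp hx0
  have hMpos : 0 < M := by
    obtain ⟨j, _⟩ := Function.ne_iff.mp hy
    exact j.pos
  haveI : Nonempty (Fin N) := ⟨i₀⟩
  haveI : Nonempty (Fin M) := ⟨⟨0, hMpos⟩⟩
  have hub : ∀ i, ‖x i‖ ≤ m := by
    intro i
    show ‖x i‖ ≤ ⨆ j, ‖x j‖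
    exact le_ciSup (f := fun j => ‖x j‖) (Set.Finite.bddAbove (Set.finite_range _)) i
  have hmpos : 0 < m := lt_of_lt_of_le (norm_pos_iff.mpr hi₀) (hub i₀)
  set T : Finset (Fin N) := Finset.univ.filter (fun i => ‖x i‖ = m) with hT
  -- every non-peak entry has norm < m
  have hlt_of_compl : ∀ i ∈ Tᶜ, ‖x i‖ < m := by
    intro i hi
    have : ‖x i‖ ≠ m := by
      intro h
      exact (Finset.mem_compl.mp hi) (Finset.mem_filter.mpr ⟨Finset.mem_univ i, h⟩)
    exact lt_of_le_of_ne (hub i) this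
  -- key cardinality claim : |Tᶜ| < M
  have hcard : Tᶜ.card < M := by
    by_contra hcge
    push_neg at hcge
    -- get an injection Fin M ↪ Tᶜ
    obtain ⟨e⟩ : Nonempty (Fin M ↪ {i // i ∈ Tᶜ}) := by
      apply Function.Embedding.nonempty_of_card_le
      rw [Fintype.card_coe, Fintype.card_fin]
      exact hcge
    set f : Fin M → Fin N := fun j => (e j : Fin N) with hf
    have hfinj : Function.Injective f := fun a b hab => e.injective (Subtype.ext hab)
    have hfmem : ∀ j, f j ∈ Tᶜ := fun j => (e j).2
    -- the columns indexed by f span ℂ^M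
    have hli := hspark f hfinj
    have hspan : Submodule.span ℂ (Set.range fun j : Fin M => fun i : Fin M => D i (f j)) = ⊤ :=
      hli.span_eq_top_of_card_eq_finrank (by simp)
    set xT : Fin N → ℂ := fun i => if i ∈ T then x i else 0 with hxT
    obtain ⟨c, hc⟩ := Submodule.mem_span_range_iff_exists_fun ℂ |>.mp
      (hspan ▸ Submodule.mem_top : D.mulVec xT ∈
        Submodule.span ℂ (Set.range fun j : Fin M => fun i : Fin M => D i (f j)))
    set z : Fin N → ℂ := fun i => ∑ j, if f j = i then c j else 0 with hz
    have hzT : ∀ i ∈ T, z i = 0 := by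
      intro i hi
      apply Finset.sum_eq_zero
      intro j _
      have hne : f j ≠ i := fun h => (Finset.mem_compl.mp (hfmem j)) (h ▸ hi)
      simp [hne]
    have hDz : D.mulVec z = D.mulVec xT := by
      funext i
      have h1 : (∑ j, c j • (fun i : Fin M => D i (f j))) i = D.mulVec xT i := by rw [hc]
      simp only [Finset.sum_apply, Pi.smul_apply, smul_eq_mul] at h1
      calc D.mulVec z i = ∑ k, D i k * z k := rfl
        _ = ∑ k, ∑ j, if f j = k then D i k * c j else 0 := by
            refine Finset.sum_congr rfl fun k _ => ?_
            rw [hz, Finset.mul_sum]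
            exact Finset.sum_congr rfl fun j _ => by split <;> simp
        _ = ∑ j, ∑ k, if f j = k then D i k * c j else 0 := Finset.sum_comm
        _ = ∑ j, D i (f j) * c j := by
            refine Finset.sum_congr rfl fun j _ => ?_
            simp
        _ = D.mulVec xT i := by
            rw [← h1]
            exact Finset.sum_congr rfl fun j _ => mul_comm _ _
    set w : Fin N → ℂ := z - xT with hw
    have hDw : D.mulVec w = 0 := by
      rw [hw, Matrix.mulVec_sub, hDz, sub_self]
    -- bounds
    have hTcne : Tᶜ.Nonempty := Finset.card_pos.mp (lt_of_lt_of_le hMpos hcge)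
    set B : ℝ := Tᶜ.sup' hTcne (fun i => ‖x i‖) with hB
    have hBlt : B < m := (Finset.sup'_lt_iff hTcne).mpr hlt_of_compl
    set Z : ℝ := Finset.univ.sup' Finset.univ_nonempty (fun i => ‖z i‖) with hZ
    have hZ0 : 0 ≤ Z := by
      rw [hZ]
      exact le_trans (norm_nonneg (z i₀)) (Finset.le_sup' (fun i => ‖z i‖) (Finset.mem_univ i₀))
    set δ : ℝ := m - B with hδ
    have hδpos : 0 < δ := by simp [hδ]; linarith
    set t : ℝ := min (1/2 : ℝ) (δ / (2 * (Z + 1))) with ht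
    have ht0 : 0 < t := lt_min (by norm_num) (div_pos hδpos (by linarith))
    have ht1 : t ≤ 1/2 := min_le_left _ _
    have htZ : t * (Z + 1) ≤ δ / 2 := by
      have h1 : t ≤ δ / (2 * (Z + 1)) := min_le_right _ _
      have h2 : t * (Z + 1) ≤ (δ / (2 * (Z + 1))) * (Z + 1) :=
        mul_le_mul_of_nonneg_right h1 (by linarith)
      calc t * (Z + 1) ≤ (δ / (2 * (Z + 1))) * (Z + 1) := h2
        _ = δ / 2 := by field_simp
    set x' : Fin N → ℂ := fun i => x i + (t : ℂ) * w i with hx'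
    have hDx' : D.mulVec x' = D.mulVec x := by
      have : x' = x + (t : ℂ) • w := by
        funext i; simp [hx', smul_eq_mul]
      rw [this, Matrix.mulVec_add, Matrix.mulVec_smul, hDw, smul_zero, add_zero]
    have hfeas' : l2 (y - D.mulVec x') ≤ ε := by rw [hDx']; exact hfeas
    have hlt : ∀ i, ‖x' i‖ < m := by
      intro i
      by_cases hi : i ∈ T
      · have hxi : ‖x i‖ = m := (Finset.mem_filter.mp hi).2
        have hwi : w i = -x i := by
          simp [hw, hzT i hi, hxT, hi]
        have h2 : x' i = ((1 - t : ℝ) : ℂ) * x i := by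
          show x i + (t : ℂ) * w i = _
          rw [hwi]; push_cast; ring
        rw [h2, norm_mul, Complex.norm_real, Real.norm_eq_abs, hxi,
          abs_of_nonneg (by linarith : (0:ℝ) ≤ 1 - t)]
        nlinarith
      · have hwi : w i = z i := by simp [hw, hxT, hi]
        have hxi : ‖x i‖ ≤ B := by
          rw [hB]
          exact Finset.le_sup' (fun i => ‖x i‖) (Finset.mem_compl.mpr hi)
        have hzi : ‖z i‖ ≤ Z := by
          rw [hZ]
          exact Finset.le_sup' (fun i => ‖z i‖) (Finset.mem_univ i)
        calc ‖x' i‖ ≤ ‖x i‖ + ‖(t : ℂ) * w i‖ := norm_add_le _ _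
          _ = ‖x i‖ + t * ‖z i‖ := by
              rw [hwi, norm_mul, Complex.norm_real, Real.norm_eq_abs,
                abs_of_nonneg (le_of_lt ht0)]
          _ ≤ B + t * Z := by
              have := mul_le_mul_of_nonneg_left hzi (le_of_lt ht0)
              linarith
          _ ≤ B + δ / 2 := by
              have : t * Z ≤ t * (Z + 1) := by nlinarith
              linarith
          _ < m := by simp [hδ] at htZ ⊢; linarith
    -- contradiction with minimality
    have hle' : linf x ≤ linf x' := hmin x' hfeas'
    have hlt' : linf x' < m := by
      have h1 : linf x' ≤ Finset.univ.sup' Finset.univ_nonempty (fun i => ‖x' i‖) := by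
        show (⨆ i, ‖x' i‖) ≤ _
        exact ciSup_le fun i => Finset.le_sup' (fun i => ‖x' i‖) (Finset.mem_univ i)
      have h2 : Finset.univ.sup' Finset.univ_nonempty (fun i => ‖x' i‖) < m :=
        (Finset.sup'_lt_iff _).mpr fun i _ => hlt i
      linarith
    rw [← hm] at hle'
    linarith
  -- cardinality of peak set
  have hTcard : N - M + 1 ≤ T.card := by
    have h1 : T.card + Tᶜ.card = N := by
      rw [Finset.card_add_card_compl]; simp
    omega
  -- final arithmetic
  have hl2 : l2 x ^ 2 = ∑ i, ‖x i‖ ^ 2 :=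
    Real.sq_sqrt (Finset.sum_nonneg fun i _ => sq_nonneg _)
  have hS : ((N - M + 1 : ℕ) : ℝ) * m ^ 2 ≤ l2 x ^ 2 := by
    rw [hl2]
    calc ((N - M + 1 : ℕ) : ℝ) * m ^ 2 ≤ (T.card : ℝ) * m ^ 2 := by
          apply mul_le_mul_of_nonneg_right _ (sq_nonneg m)
          exact_mod_cast hTcard
      _ = ∑ i ∈ T, ‖x i‖ ^ 2 := by
          rw [Finset.sum_congr rfl (fun i hi => by rw [(Finset.mem_filter.mp hi).2]),
            Finset.sum_const, nsmul_eq_mul]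
      _ ≤ ∑ i, ‖x i‖ ^ 2 :=
          Finset.sum_le_sum_of_subset_of_nonneg (Finset.subset_univ T)
            (fun i _ _ => sq_nonneg _)
  have hK : (0 : ℝ) < ((N - M + 1 : ℕ) : ℝ) := by
    have : 1 ≤ N - M + 1 := by omega
    exact_mod_cast lt_of_lt_of_le zero_lt_one (by exact_mod_cast this)
  have hl2pos : 0 < l2 x ^ 2 := lt_of_lt_of_le (by positivity) hS
  rw [div_le_div_iff₀ hl2pos hK]
  have hN0 : (0 : ℝ) ≤ (N : ℝ) := Nat.cast_nonneg N
  nlinarith [mul_le_mul_of_nonneg_left hS hN0]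
end

section
/- Strong duality for ℓ∞-norm minimization: for a full-rank matrix D ∈ ℂ^{M×N} (M ≤ N), y ∈ ℂ^M, and ε ≥ 0, the optimal value of min{‖x‖_∞ : ‖y − Dx‖₂ ≤ ε} equals the optimal value of max{Re(yᴴz) − ε‖z‖₂ : z ∈ ℂ^M, ‖Dᴴz‖₁ ≤ 1}. -/
open scoped BigOperators Matrix

/-!
Weak duality is Hölder (ℓ∞ against ℓ₁) plus Cauchy–Schwarz after writing
`y = (y - D x) + D x`. For the reverse inequality, let `t ≥ 0` lie below every primal value.
Then `D` maps the ℓ∞-ball of radius `t` to a compact convex set disjoint from the closed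
Euclidean ball of radius `ε` about `y`. A real functional `Re ⟪z, ·⟫` separating the two gives
`t ‖Dᴴ z‖₁ < Re ⟪y, z⟫ - ε ‖z‖₂`, and rescaling `z` makes it dual feasible with value above `t`.
-/

open scoped InnerProductSpace
open Matrix Metric RCLike

lemma div_mul_le_of_nonneg {a : ℝ} (ha : 0 ≤ a) (b : ℝ) : a / b * b ≤ a := by
  rcases eq_or_ne b 0 with rfl | hb
  · simpa using ha
  · rw [div_mul_cancel₀ _ hb]

lemma exists_mul_le_one_lt_mul {s g t : ℝ} (hs : 0 ≤ s) (ht : 0 ≤ t) (h : t * s < g) :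
    ∃ c : ℝ, 0 ≤ c ∧ c * s ≤ 1 ∧ t < c * g := by
  have hg : 0 < s + g := by nlinarith
  refine ⟨(1 + t) / (s + g), by positivity, ?_, ?_⟩
  · rw [div_mul_eq_mul_div, div_le_one hg]; nlinarith
  · rw [div_mul_eq_mul_div, lt_div_iff₀ hg]; nlinarith

lemma exists_re_inner_eq {𝕜 E : Type*} [RCLike 𝕜] [NormedAddCommGroup E] [InnerProductSpace 𝕜 E]
    [CompleteSpace E] [NormedSpace ℝ E] [IsScalarTower ℝ 𝕜 E] (f : StrongDual ℝ E) :
    ∃ z : E, ∀ x, f x = re ⟪z, x⟫_𝕜 :=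
  ⟨(InnerProductSpace.toDual 𝕜 E).symm f.extendRCLike, fun x => by
    rw [InnerProductSpace.toDual_symm_apply, StrongDual.re_extendRCLike_apply]⟩

lemma exists_mem_closedBall_re_inner_eq {𝕜 E : Type*} [RCLike 𝕜] [NormedAddCommGroup E]
    [InnerProductSpace 𝕜 E] (z y : E) {ε : ℝ} (hε : 0 ≤ ε) :
    ∃ b ∈ closedBall y ε, re ⟪z, b⟫_𝕜 = re ⟪z, y⟫_𝕜 - ε * ‖z‖ := by
  refine ⟨y - ((ε / ‖z‖ : ℝ) : 𝕜) • z, ?_, ?_⟩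
  · rw [mem_closedBall, dist_eq_norm, sub_sub_cancel_left, norm_neg, norm_smul, norm_algebraMap',
      Real.norm_of_nonneg (by positivity)]
    exact div_mul_le_of_nonneg hε _
  · rw [inner_sub_right, inner_smul_right, inner_self_eq_norm_sq_to_K, map_sub, ← ofReal_pow,
      ← ofReal_mul, ofReal_re]
    rcases eq_or_ne ‖z‖ 0 with h | h
    · simp [h]
    · field_simp

lemma Matrix.mulVec_surjective_of_rank_eq_card {m n R : Type*} [Fintype m] [Fintype n] [Field R]
    (A : Matrix m n R) (h : A.rank = Fintype.card m) : Function.Surjective A.mulVec := by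
  have : LinearMap.range A.mulVecLin = ⊤ :=
    Submodule.eq_top_of_finrank_eq (by rw [← Matrix.rank, h, Module.finrank_fintype_fun_eq_card])
  exact LinearMap.range_eq_top.mp this

lemma inner_toLp_mulVec {m n : Type*} [Fintype m] [Fintype n] (D : Matrix m n ℂ) (x : n → ℂ)
    (z : m → ℂ) :
    ⟪WithLp.toLp 2 (D *ᵥ x), WithLp.toLp 2 z⟫_ℂ = star x ⬝ᵥ (Dᴴ *ᵥ z) := by
  rw [EuclideanSpace.inner_toLp_toLp, dotProduct_comm, star_mulVec, ← dotProduct_mulVec]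

lemma linf_eq_norm {n : ℕ} (x : Fin n → ℂ) : linf x = ‖x‖ :=
  PiLp.norm_toLp x

lemma l2_eq_norm {n : ℕ} (x : Fin n → ℂ) : l2 x = ‖WithLp.toLp 2 x‖ :=
  (EuclideanSpace.norm_eq _).symm

lemma l1_eq_norm {n : ℕ} (x : Fin n → ℂ) : l1 x = ‖WithLp.toLp 1 x‖ :=
  (PiLp.norm_eq_of_L1 _).symm

lemma l1_smul {n : ℕ} (x : Fin n → ℂ) {c : ℝ} (hc : 0 ≤ c) : l1 (c • x) = c * l1 x := by
  rw [l1_eq_norm, l1_eq_norm, WithLp.toLp_smul, norm_smul, Real.norm_of_nonneg hc]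

lemma re_star_dotProduct_le {n : ℕ} (x w : Fin n → ℂ) : (star x ⬝ᵥ w).re ≤ ‖x‖ * l1 w :=
  calc (star x ⬝ᵥ w).re ≤ ∑ i, ‖x i‖ * ‖w i‖ := by
        rw [dotProduct, Complex.re_sum]
        gcongr with i
        exact (Complex.re_le_norm _).trans (by simp)
    _ ≤ ∑ i, ‖x‖ * ‖w i‖ := by gcongr with i; exact norm_le_pi_norm x i
    _ = ‖x‖ * l1 w := by rw [l1, Finset.mul_sum]

lemma exists_norm_le_re_star_dotProduct_eq {n : ℕ} (w : Fin n → ℂ) {t : ℝ} (ht : 0 ≤ t) :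
    ∃ x : Fin n → ℂ, ‖x‖ ≤ t ∧ (star x ⬝ᵥ w).re = t * l1 w := by
  -- the coordinates with `w i = 0` are `0`, as `t / 0 = 0`
  refine ⟨fun i => ((t / ‖w i‖ : ℝ) : ℂ) * w i, (pi_norm_le_iff_of_nonneg ht).2 fun i => ?_, ?_⟩
  · rw [norm_mul, Complex.norm_real, Real.norm_of_nonneg (by positivity)]
    exact div_mul_le_of_nonneg ht _
  · rw [l1, Finset.mul_sum, dotProduct, Complex.re_sum]
    refine Finset.sum_congr rfl fun i _ => ?_
    rw [Pi.star_apply, star_mul', Complex.star_def, Complex.conj_ofReal, mul_assoc,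
      Complex.conj_mul', ← Complex.ofReal_pow, ← Complex.ofReal_mul, Complex.ofReal_re]
    rcases eq_or_ne ‖w i‖ 0 with h | h
    · simp [h]
    · field_simp

-- `star y ⬝ᵥ z` unfolds to the `∑ i, conj (y i) * z i` of the dual problem
noncomputable def dualObjective {M : ℕ} (y : Fin M → ℂ) (ε : ℝ) (z : Fin M → ℂ) : ℝ :=
  (star y ⬝ᵥ z).re - ε * l2 z

lemma dualObjective_smul {M : ℕ} (y : Fin M → ℂ) (ε : ℝ) (z : Fin M → ℂ) {c : ℝ} (hc : 0 ≤ c) :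
    dualObjective y ε (c • z) = c * dualObjective y ε z := by
  rw [dualObjective, dualObjective, dotProduct_smul, Complex.smul_re, l2_eq_norm, l2_eq_norm,
    WithLp.toLp_smul, norm_smul, Real.norm_of_nonneg hc, smul_eq_mul]
  ring

lemma weak_duality {M N : ℕ} (D : Matrix (Fin M) (Fin N) ℂ) (y : Fin M → ℂ) (ε : ℝ)
    {x : Fin N → ℂ} {z : Fin M → ℂ} (hx : l2 (y - D *ᵥ x) ≤ ε) (hz : l1 (Dᴴ *ᵥ z) ≤ 1) :
    dualObjective y ε z ≤ linf x := by
  have hsplit : (star y ⬝ᵥ z).re =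
      (⟪WithLp.toLp 2 (y - D *ᵥ x), WithLp.toLp 2 z⟫_ℂ).re + (star x ⬝ᵥ (Dᴴ *ᵥ z)).re := by
    rw [← inner_toLp_mulVec, ← Complex.add_re, ← inner_add_left, ← WithLp.toLp_add, sub_add_cancel,
      EuclideanSpace.inner_toLp_toLp, dotProduct_comm]
  have hres : (⟪WithLp.toLp 2 (y - D *ᵥ x), WithLp.toLp 2 z⟫_ℂ).re ≤ ε * l2 z := by
    calc _ ≤ ‖WithLp.toLp 2 (y - D *ᵥ x)‖ * ‖WithLp.toLp 2 z‖ :=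
          (Complex.re_le_norm _).trans (norm_inner_le_norm _ _)
      _ ≤ ε * l2 z := by
          rw [← l2_eq_norm, ← l2_eq_norm]; exact mul_le_mul_of_nonneg_right hx (Real.sqrt_nonneg _)
  have hprim : (star x ⬝ᵥ (Dᴴ *ᵥ z)).re ≤ linf x := by
    rw [linf_eq_norm]
    exact (re_star_dotProduct_le _ _).trans (mul_le_of_le_one_right (norm_nonneg _) hz)
  rw [dualObjective]
  linarith

lemma exists_dualObjective_gt_mul_l1 {M N : ℕ} (D : Matrix (Fin M) (Fin N) ℂ) (y : Fin M → ℂ)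
    {ε t : ℝ} (hε : 0 ≤ ε) (ht : 0 ≤ t) (hprimal : ∀ x, l2 (y - D *ᵥ x) ≤ ε → t < linf x) :
    ∃ z : Fin M → ℂ, t * l1 (Dᴴ *ᵥ z) < dualObjective y ε z := by
  let A : (Fin N → ℂ) →ₗ[ℂ] EuclideanSpace ℂ (Fin M) :=
    (WithLp.linearEquiv 2 ℂ (Fin M → ℂ)).symm.toLinearMap ∘ₗ D.mulVecLin
  have hdisj : Disjoint (A '' closedBall 0 t) (closedBall (WithLp.toLp 2 y) ε) := by
    refine Set.disjoint_left.2 ?_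
    rintro _ ⟨x, hxt, rfl⟩ hxy
    rw [mem_closedBall_zero_iff] at hxt
    rw [mem_closedBall, dist_comm, dist_eq_norm, ← WithLp.toLp_sub, ← l2_eq_norm] at hxy
    exact (hprimal x hxy).not_ge (by rwa [linf_eq_norm])
  obtain ⟨f, u, v, hfA, huv, hfB⟩ := geometric_hahn_banach_compact_closed
    ((convex_closedBall 0 t).linear_image (A.restrictScalars ℝ))
    ((isCompact_closedBall 0 t).image A.continuous_of_finiteDimensional)
    (convex_closedBall _ ε) isClosed_closedBall hdisj
  obtain ⟨z, hfz⟩ := exists_re_inner_eq (𝕜 := ℂ) f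
  obtain ⟨x, hxt, hx⟩ := exists_norm_le_re_star_dotProduct_eq (Dᴴ *ᵥ z.ofLp) ht
  obtain ⟨b, hb, hbz⟩ := exists_mem_closedBall_re_inner_eq (𝕜 := ℂ) z (WithLp.toLp 2 y) hε
  refine ⟨z.ofLp, ?_⟩
  have hAx : t * l1 (Dᴴ *ᵥ z.ofLp) < u := by
    have := hfA (A x) ⟨x, mem_closedBall_zero_iff.2 hxt, rfl⟩
    rw [hfz, inner_re_symm] at this
    rwa [← hx, ← inner_toLp_mulVec]
  have hbv : v < dualObjective y ε z.ofLp := by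
    have := hfB b hb
    rw [hfz, hbz, inner_re_symm] at this
    rwa [dualObjective, l2_eq_norm, dotProduct_comm]
  linarith

lemma exists_dual_feasible_gt {M N : ℕ} (D : Matrix (Fin M) (Fin N) ℂ) (y : Fin M → ℂ)
    {ε t : ℝ} (hε : 0 ≤ ε) (hprimal : ∀ x, l2 (y - D *ᵥ x) ≤ ε → t < linf x) :
    ∃ z, l1 (Dᴴ *ᵥ z) ≤ 1 ∧ t < dualObjective y ε z := by
  rcases lt_or_ge t 0 with ht | ht
  · exact ⟨0, by simp [l1], by simpa [dualObjective, l2] using ht⟩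
  obtain ⟨z, hz⟩ := exists_dualObjective_gt_mul_l1 D y hε ht hprimal
  obtain ⟨c, hc, hcs, hcg⟩ := exists_mul_le_one_lt_mul (l1_eq_norm _ ▸ norm_nonneg _) ht hz
  refine ⟨c • z, ?_, ?_⟩
  · rwa [mulVec_smul, l1_smul _ hc]
  · rwa [dualObjective_smul _ _ _ hc]

theorem strong_duality_general {M N : ℕ} (D : Matrix (Fin M) (Fin N) ℂ) (y : Fin M → ℂ) (ε : ℝ)
    (hrank : D.rank = M) (hε : 0 ≤ ε) :
    sInf {t : ℝ | ∃ x : Fin N → ℂ, l2 (y - D.mulVec x) ≤ ε ∧ t = linf x} =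
    sSup {t : ℝ | ∃ z : Fin M → ℂ, l1 (D.conjTranspose.mulVec z) ≤ 1 ∧
      t = (∑ i, starRingEnd ℂ (y i) * z i).re - ε * l2 z} := by
  set S := {t : ℝ | ∃ x : Fin N → ℂ, l2 (y - D.mulVec x) ≤ ε ∧ t = linf x}
  set T := {t : ℝ | ∃ z : Fin M → ℂ, l1 (D.conjTranspose.mulVec z) ≤ 1 ∧
      t = (∑ i, starRingEnd ℂ (y i) * z i).re - ε * l2 z}
  obtain ⟨x₀, hx₀⟩ := D.mulVec_surjective_of_rank_eq_card (by simpa using hrank) y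
  have hS : S.Nonempty := ⟨_, x₀, by simpa [hx₀, l2] using hε, rfl⟩
  have hbdd : BddBelow S := ⟨0, by rintro _ ⟨x, -, rfl⟩; exact linf_eq_norm x ▸ norm_nonneg x⟩
  have hT : T.Nonempty := ⟨0, 0, by simp [l1], by simp [l2]⟩
  refine (csSup_eq_of_forall_le_of_forall_lt_exists_gt hT ?_ ?_).symm
  · rintro _ ⟨z, hz, rfl⟩
    refine le_csInf hS ?_
    rintro _ ⟨x, hx, rfl⟩
    exact weak_duality D y ε hx hz
  · intro t ht
    obtain ⟨z, hz, hlt⟩ :=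
      exists_dual_feasible_gt D y hε fun x hx => ht.trans_le (csInf_le hbdd ⟨x, hx, rfl⟩)
    exact ⟨_, ⟨z, hz, rfl⟩, hlt⟩

/-- Strong duality for ℓ∞-norm minimization. -/
theorem strong_duality {M N : ℕ} (D : Matrix (Fin M) (Fin N) ℂ) (y : Fin M → ℂ) (ε : ℝ)
    (hMN : M ≤ N) (hrank : D.rank = M) (hε : 0 ≤ ε) :
    sInf {t : ℝ | ∃ x : Fin N → ℂ, l2 (y - D.mulVec x) ≤ ε ∧ t = linf x} =
    sSup {t : ℝ | ∃ z : Fin M → ℂ, l1 (D.conjTranspose.mulVec z) ≤ 1 ∧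
      t = (∑ i, starRingEnd ℂ (y i) * z i).re - ε * l2 z} :=
  strong_duality_general D y ε hrank hε
end
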